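/- arXiv:1708.03890 — 2 statements merged into one kernel-verified Lean document; each statement's English description precedes it below -/
import Mathlib

section
/- Let a be a vertex of a graph G. Then, as polynomials, (1−x−y) · Σ_{W : N[a] ∩ W = ∅} x^{|W|} y^{|N_G(W)|} = J(G) − x y^{|N(a)|} J(G − N[a]) − x J(G∖a) − y J(G − a). -/
open Finset
open scoped Classical

/-!
Pair every `U ⊆ V ∖ {a}` with `U ∪ {a}` and compare weights `x^|W| y^|N(W)|`. If `U` meets
`N(a)`, then `U` has in `G∖a` the outer neighbourhood of `U ∪ {a}` in `G`, and in `G - a` the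
outer neighbourhood it has in `G` minus the vertex `a`. If `U` avoids `N(a)`, then `U` has the
same weight in `G`, `G∖a` and `G - a`, while the weight of `U ∪ {a}` in `G` is `x y^|N(a)|` times
the weight of `U` in `G - N[a]`. Summing over `U` gives the identity.
-/

/-- External neighbourhood N(W) = N[W] \ W of a vertex subset. -/
noncomputable def extN {V : Type} [Fintype V] (G : SimpleGraph V) (W : Finset V) : Finset V :=
  Finset.univ.filter (fun v => v ∉ W ∧ ∃ w ∈ W, G.Adj v w)

/-- The bivariate domination polynomial J(G;x,y) = ∑_{W ⊆ V} x^|W| y^|N(W)|. -/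
noncomputable def JP {V : Type} [Fintype V] (G : SimpleGraph V) (x y : ℝ) : ℝ :=
  ∑ W : Finset V, x ^ W.card * y ^ (extN G W).card

/-- Vertex deletion G − a. -/
noncomputable def Gdel {V : Type} (G : SimpleGraph V) (a : V) : SimpleGraph {v : V // v ≠ a} :=
  G.induce {v : V | v ≠ a}

/-- Deletion of a set of vertices. -/
noncomputable def GdelSet {V : Type} (G : SimpleGraph V) (S : Set V) : SimpleGraph {v : V // v ∉ S} :=
  G.induce {v : V | v ∉ S}

/-- Vertex contraction G∖a: join all neighbours of a, then delete a. -/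
noncomputable def Gcon {V : Type} (G : SimpleGraph V) (a : V) : SimpleGraph {v : V // v ≠ a} where
  Adj u v := u ≠ v ∧ (G.Adj u.val v.val ∨ (G.Adj u.val a ∧ G.Adj a v.val))
  symm := ⟨fun _ _ ⟨h1, h2⟩ =>
    ⟨fun e => h1 e.symm, h2.imp G.adj_symm (fun ⟨p, q⟩ => ⟨G.adj_symm q, G.adj_symm p⟩)⟩⟩
  loopless := ⟨fun _ h => h.1 rfl⟩

namespace Finset

theorem subtype_map_subtype {α : Type*} (p : α → Prop) [DecidablePred p]
    (W : Finset (Subtype p)) : (W.map (Function.Embedding.subtype p)).subtype p = W := by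
  ext w
  simpa using fun _ => w.2

theorem sum_finset_subtype {α M : Type*} [Fintype α] [AddCommMonoid M] (p : α → Prop)
    [DecidablePred p] (f : Finset (Subtype p) → M) :
    ∑ W : Finset (Subtype p), f W = ∑ U ∈ (univ.filter p).powerset, f (U.subtype p) := by
  refine sum_nbij' (fun W => W.map (Function.Embedding.subtype p)) (fun U => U.subtype p)
    ?_ (by simp) (fun W _ => subtype_map_subtype p W) ?_ ?_
  · intro W _
    simpa [subset_iff] using fun _ hx _ => hx
  · intro U hU
    rw [subtype_map, filter_true_of_mem]
    simpa [subset_iff] using hU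
  · intro W _
    rw [subtype_map_subtype]

theorem card_subtype_of_forall {α : Type*} {p : α → Prop} [DecidablePred p] {s : Finset α}
    (h : ∀ a ∈ s, p a) : #(s.subtype p) = #s := by
  rw [card_subtype, filter_true_of_mem h]

theorem card_subtype_ne {α : Type*} [DecidableEq α] {s : Finset α} {a : α} (h : a ∉ s) :
    #(s.subtype (· ≠ a)) = #s :=
  card_subtype_of_forall fun _ hb => ne_of_mem_of_not_mem hb h

end Finset

theorem Gcon_adj {V : Type} (G : SimpleGraph V) (a : V) {u v : {v : V // v ≠ a}} :
    (Gcon G a).Adj u v ↔ u ≠ v ∧ (G.Adj u v ∨ (G.Adj u a ∧ G.Adj a v)) := Iff.rfl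

noncomputable def jWeight {W : Type} [Fintype W] (H : SimpleGraph W) (x y : ℝ) (S : Finset W) :
    ℝ :=
  x ^ #S * y ^ #(extN H S)

theorem JP_eq_sum_jWeight {W : Type} [Fintype W] (H : SimpleGraph W) (x y : ℝ) :
    JP H x y = ∑ S, jWeight H x y S := rfl

section
variable {V : Type} [Fintype V] (G : SimpleGraph V)

theorem mem_extN {W : Finset V} {v : V} : v ∈ extN G W ↔ v ∉ W ∧ ∃ w ∈ W, G.Adj v w := by
  simp [extN]

theorem extN_induce_subtype (p : V → Prop) [DecidablePred p] {U : Finset V}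
    (hU : ∀ u ∈ U, p u) :
    (extN (G.induce {v | p v}) (U.subtype p)).map (Function.Embedding.subtype p) =
      (extN G U).filter p := by
  ext v
  simp only [Finset.mem_map, Function.Embedding.coe_subtype, mem_extN, Finset.mem_filter]
  constructor
  · rintro ⟨⟨v, hv⟩, ⟨hvU, ⟨w, hw⟩, hwU, hvw⟩, rfl⟩
    simp only [Finset.mem_subtype] at hvU hwU
    exact ⟨⟨hvU, w, hwU, hvw⟩, hv⟩
  · rintro ⟨⟨hvU, w, hwU, hvw⟩, hv⟩
    exact ⟨⟨v, hv⟩, ⟨by simpa using hvU, ⟨w, hU w hwU⟩, by simpa using hwU, hvw⟩, rfl⟩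

variable (a : V) {U : Finset V}

theorem mem_extN_iff_exists_adj (haU : a ∉ U) : a ∈ extN G U ↔ ∃ u ∈ U, G.Adj a u := by
  simp [mem_extN, haU]

theorem extN_Gcon_subtype_of_exists_adj (hU : ∃ u ∈ U, G.Adj a u) :
    (extN (Gcon G a) (U.subtype (· ≠ a))).map (Function.Embedding.subtype _) =
      extN G (insert a U) := by
  ext v
  simp only [Finset.mem_map, Function.Embedding.coe_subtype, mem_extN, Finset.mem_insert,
    Subtype.exists, Finset.mem_subtype, exists_and_right, exists_eq_right, Gcon_adj, ne_eq,
    Subtype.mk.injEq]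
  -- a neighbour `v ∉ U` of `a` is joined to `u` in `G∖a`
  obtain ⟨u, huU, hau⟩ := hU
  grind [SimpleGraph.adj_symm, SimpleGraph.ne_of_adj]

theorem extN_Gcon_subtype_of_forall_not_adj (haU : a ∉ U) (hU : ∀ u ∈ U, ¬ G.Adj a u) :
    (extN (Gcon G a) (U.subtype (· ≠ a))).map (Function.Embedding.subtype _) = extN G U := by
  ext v
  simp only [Finset.mem_map, Function.Embedding.coe_subtype, mem_extN,
    Subtype.exists, Finset.mem_subtype, exists_and_right, exists_eq_right, Gcon_adj, ne_eq,
    Subtype.mk.injEq]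
  grind [SimpleGraph.adj_symm, SimpleGraph.ne_of_adj]

theorem card_extN_Gdel_subtype (haU : a ∉ U) :
    #(extN (Gdel G a) (U.subtype (· ≠ a))) = #((extN G U).erase a) := by
  rw [← filter_ne', ← extN_induce_subtype G (· ≠ a) fun _ hu => ne_of_mem_of_not_mem hu haU,
    card_map]
  rfl

theorem extN_insert_of_forall_not_adj (hU : ∀ u ∈ U, ¬ G.Adj a u) :
    extN G (insert a U) =
      univ.filter (fun v => G.Adj a v) ∪ (extN G U).filter (· ∉ {v : V | v = a ∨ G.Adj a v}) := by
  ext v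
  simp only [mem_extN, Finset.mem_insert, Finset.mem_union, Finset.mem_filter, mem_univ,
    true_and, Set.mem_ofPred_eq]
  grind [SimpleGraph.adj_symm, SimpleGraph.ne_of_adj]

variable {x y : ℝ}

theorem jWeight_Gcon_of_exists_adj (haU : a ∉ U) (hU : ∃ u ∈ U, G.Adj a u) :
    x * jWeight (Gcon G a) x y (U.subtype (· ≠ a)) = jWeight G x y (insert a U) := by
  rw [jWeight, jWeight, card_insert_of_notMem haU, ← extN_Gcon_subtype_of_exists_adj G a hU,
    card_map, card_subtype_ne haU]
  ring

theorem jWeight_Gcon_of_forall_not_adj (haU : a ∉ U) (hU : ∀ u ∈ U, ¬ G.Adj a u) :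
    jWeight (Gcon G a) x y (U.subtype (· ≠ a)) = jWeight G x y U := by
  rw [jWeight, jWeight, ← extN_Gcon_subtype_of_forall_not_adj G a haU hU, card_map,
    card_subtype_ne haU]

theorem jWeight_Gdel_of_exists_adj (haU : a ∉ U) (hU : ∃ u ∈ U, G.Adj a u) :
    y * jWeight (Gdel G a) x y (U.subtype (· ≠ a)) = jWeight G x y U := by
  rw [jWeight, jWeight, card_extN_Gdel_subtype G a haU, card_subtype_ne haU,
    ← card_erase_add_one ((mem_extN_iff_exists_adj G a haU).2 hU)]
  ring

theorem jWeight_Gdel_of_forall_not_adj (haU : a ∉ U) (hU : ∀ u ∈ U, ¬ G.Adj a u) :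
    jWeight (Gdel G a) x y (U.subtype (· ≠ a)) = jWeight G x y U := by
  have ha : a ∉ extN G U := fun h => by
    obtain ⟨u, hu, hau⟩ := (mem_extN_iff_exists_adj G a haU).1 h
    exact hU u hu hau
  rw [jWeight, jWeight, card_extN_Gdel_subtype G a haU, card_subtype_ne haU,
    erase_eq_of_notMem ha]

theorem jWeight_GdelSet_of_forall_not_adj (haU : a ∉ U) (hU : ∀ u ∈ U, ¬ G.Adj a u) :
    x * y ^ #(univ.filter (fun v => G.Adj a v)) *
        jWeight (GdelSet G {v : V | v = a ∨ G.Adj a v}) x y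
          (U.subtype (· ∉ {v : V | v = a ∨ G.Adj a v})) =
      jWeight G x y (insert a U) := by
  have hUS : ∀ u ∈ U, u ∉ {v : V | v = a ∨ G.Adj a v} :=
    fun u hu h => h.elim (fun h => haU (h ▸ hu)) (hU u hu)
  have hdisj : Disjoint (univ.filter (fun v => G.Adj a v))
      ((extN G U).filter (· ∉ {v : V | v = a ∨ G.Adj a v})) :=
    disjoint_left.2 fun _ hv hv' => (mem_filter.1 hv').2 (Or.inr (mem_filter.1 hv).2)
  rw [jWeight, jWeight, GdelSet, card_insert_of_notMem haU, extN_insert_of_forall_not_adj G a hU,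
    card_union_of_disjoint hdisj, ← extN_induce_subtype G _ hUS, card_map,
    card_subtype_of_forall hUS]
  ring

theorem jWeight_add_jWeight_insert_sub (haU : a ∉ U) :
    jWeight G x y U + jWeight G x y (insert a U)
      - x * y ^ #(univ.filter (fun v => G.Adj a v)) *
          (if ∀ u ∈ U, ¬ G.Adj a u then
            jWeight (GdelSet G {v : V | v = a ∨ G.Adj a v}) x y
              (U.subtype (· ∉ {v : V | v = a ∨ G.Adj a v}))
          else 0)
      - x * jWeight (Gcon G a) x y (U.subtype (· ≠ a))
      - y * jWeight (Gdel G a) x y (U.subtype (· ≠ a)) =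
    (1 - x - y) * if ∀ u ∈ U, ¬ G.Adj a u then jWeight G x y U else 0 := by
  by_cases hU : ∀ u ∈ U, ¬ G.Adj a u
  · rw [if_pos hU, if_pos hU, jWeight_GdelSet_of_forall_not_adj G a haU hU,
      jWeight_Gcon_of_forall_not_adj G a haU hU, jWeight_Gdel_of_forall_not_adj G a haU hU]
    ring
  · have hU' : ∃ u ∈ U, G.Adj a u := by simpa using hU
    rw [if_neg hU, if_neg hU, ← jWeight_Gcon_of_exists_adj G a haU hU',
      ← jWeight_Gdel_of_exists_adj G a haU hU']
    ring

theorem JP_eq_sum_powerset_erase :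
    JP G x y = ∑ U ∈ (univ.erase a).powerset, (jWeight G x y U + jWeight G x y (insert a U)) := by
  rw [JP_eq_sum_jWeight, ← powerset_univ, ← insert_erase (mem_univ a),
    sum_powerset_insert (notMem_erase a univ), sum_add_distrib, erase_insert (notMem_erase a univ)]

theorem JP_eq_sum_powerset_erase_subtype (H : SimpleGraph {v : V // v ≠ a}) :
    JP H x y = ∑ U ∈ (univ.erase a).powerset, jWeight H x y (U.subtype (· ≠ a)) := by
  rw [JP_eq_sum_jWeight, sum_finset_subtype, filter_ne']

theorem JP_GdelSet_eq_sum_powerset_erase :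
    JP (GdelSet G {v : V | v = a ∨ G.Adj a v}) x y =
      ∑ U ∈ (univ.erase a).powerset with ∀ u ∈ U, ¬ G.Adj a u,
        jWeight (GdelSet G {v : V | v = a ∨ G.Adj a v}) x y
          (U.subtype (· ∉ {v : V | v = a ∨ G.Adj a v})) := by
  rw [JP_eq_sum_jWeight, sum_finset_subtype]
  congr 1
  ext U
  simp only [mem_powerset, mem_filter, subset_iff, mem_univ, true_and, mem_erase, ne_eq,
    and_true, Set.mem_ofPred_eq, not_or]
  exact forall₂_and

end

theorem J_cond_closed_nbhd_empty {V : Type} [Fintype V] (G : SimpleGraph V) (a : V) (x y : ℝ) :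
    (1 - x - y) * ∑ W ∈ Finset.univ.filter
        (fun W : Finset V => a ∉ W ∧ ∀ w ∈ W, ¬ G.Adj a w),
      x ^ W.card * y ^ (extN G W).card
      = JP G x y
        - x * y ^ (Finset.univ.filter (fun v => G.Adj a v)).card *
            JP (GdelSet G {v : V | v = a ∨ G.Adj a v}) x y
        - x * JP (Gcon G a) x y - y * JP (Gdel G a) x y := by
  have hcond : univ.filter (fun W : Finset V => a ∉ W ∧ ∀ w ∈ W, ¬ G.Adj a w) =
      (univ.erase a).powerset.filter (fun U => ∀ u ∈ U, ¬ G.Adj a u) := by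
    ext U
    simp [subset_iff]
  rw [hcond, JP_eq_sum_powerset_erase G a, JP_eq_sum_powerset_erase_subtype a (Gcon G a),
    JP_eq_sum_powerset_erase_subtype a (Gdel G a), JP_GdelSet_eq_sum_powerset_erase,
    sum_filter, sum_filter, mul_sum, mul_sum, mul_sum, mul_sum, ← sum_sub_distrib,
    ← sum_sub_distrib, ← sum_sub_distrib]
  exact sum_congr rfl fun U hU =>
    (jWeight_add_jWeight_insert_sub G a fun haU => by simpa using mem_powerset.1 hU haU).symm
end

section
/- If G contains a vertex v of valency 1 with unique neighbour u, then J(G) = (1+x) J(G − v) + x(y−1)( J((G−v)∖u) + y^{|N(u)|−1} J(G − N[u]) ). -/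
/-!
Split `W ⊆ V` as `A`, `A + u`, `A + v`, `A + u + v` with `A ⊆ V - u - v`. Since `N(v) = {u}`, the
outer neighbourhoods of these in `G` are those of `A` and `A + u` in `G - v`, except that `v` is
added for `A + u`, and `u` is added for `A + v` exactly when `A` misses `N(u)`. Hence
`J(G) - (1 + x) J(G - v) = x (y - 1) Σ_A x^|A| (y^|N(A + u)| + [A ∩ N(u) = ∅] y^|N(A)|)`,
neighbourhoods taken in `G - v`. If `A` meets `N(u)`, then `N(A + u)` is the neighbourhood of `A`
in the contraction `(G - v) ∖ u`; otherwise the latter is `N(A)`, while `N(A + u)` is the disjoint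
union of `N(u) - v` and the neighbourhood of `A` in `G - N[u]`.
-/

open Finset
open scoped Classical

section Relative

variable {α β : Type*}

-- A graph on a vertex set `S ⊆ α` given by an adjacency relation `R` on `α`: this lets `J` of
-- induced subgraphs and contractions, which live on subtypes, be computed inside `α`.
noncomputable def extNOn (R : α → α → Prop) (S W : Finset α) : Finset α :=
  S.filter fun w => w ∉ W ∧ ∃ c ∈ W, R w c

noncomputable def JOn (R : α → α → Prop) (S : Finset α) (x y : ℝ) : ℝ :=
  ∑ W ∈ S.powerset, x ^ #W * y ^ #(extNOn R S W)

theorem mem_extNOn {R : α → α → Prop} {S W : Finset α} {w : α} :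
    w ∈ extNOn R S W ↔ w ∈ S ∧ w ∉ W ∧ ∃ c ∈ W, R w c :=
  mem_filter

theorem Finset.powerset_map (f : α ↪ β) (s : Finset α) :
    (s.map f).powerset = s.powerset.map (Finset.mapEmbedding f).toEmbedding := by
  ext t
  simp only [mem_powerset, mem_map, subset_map_iff, RelEmbedding.coe_toEmbedding,
    mapEmbedding_apply]
  exact ⟨fun ⟨u, hu, h⟩ => ⟨u, hu, h.symm⟩, fun ⟨u, hu, h⟩ => ⟨u, hu, h.symm⟩⟩

theorem extNOn_map (f : α ↪ β) {R : α → α → Prop} {R' : β → β → Prop}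
    (hR : ∀ a b, R a b ↔ R' (f a) (f b)) (S W : Finset α) :
    extNOn R' (S.map f) (W.map f) = (extNOn R S W).map f := by
  ext w
  simp only [mem_extNOn, mem_map, exists_exists_and_eq_and, hR]
  constructor
  · rintro ⟨⟨a, ha, rfl⟩, hW, hc⟩
    exact ⟨a, ⟨ha, fun h => hW ⟨a, h, rfl⟩, hc⟩, rfl⟩
  · rintro ⟨a, ⟨ha, hW, hc⟩, rfl⟩
    exact ⟨⟨a, ha, rfl⟩, by simpa using hW, hc⟩

theorem JOn_map (f : α ↪ β) {R : α → α → Prop} {R' : β → β → Prop}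
    (hR : ∀ a b, R a b ↔ R' (f a) (f b)) (S : Finset α) (x y : ℝ) :
    JOn R' (S.map f) x y = JOn R S x y := by
  rw [JOn, powerset_map, sum_map]
  refine sum_congr rfl fun W _ => ?_
  simp only [RelEmbedding.coe_toEmbedding, mapEmbedding_apply, extNOn_map f hR, card_map]

theorem sum_powerset_eq_sum_erase {M : Type*} [AddCommMonoid M] [DecidableEq α] {a : α}
    {S : Finset α} (ha : a ∈ S) (f : Finset α → M) :
    ∑ W ∈ S.powerset, f W = ∑ W ∈ (S.erase a).powerset, (f W + f (insert a W)) := by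
  rw [sum_add_distrib, ← sum_powerset_insert (notMem_erase a S), insert_erase ha]

theorem extNOn_of_mem {R : α → α → Prop} {S : Finset α} {a : α} (ha : a ∈ S)
    (W : Finset α) :
    extNOn R S W = if a ∉ W ∧ ∃ c ∈ W, R a c then insert a (extNOn R (S.erase a) W)
      else extNOn R (S.erase a) W := by
  rw [extNOn, ← insert_erase ha, filter_insert, erase_insert (notMem_erase a S)]
  rfl

theorem extNOn_insert_of_notMem {R : α → α → Prop} {S : Finset α} {a : α}
    (ha : a ∉ S) (W : Finset α) :
    extNOn R S (insert a W) = extNOn R S W ∪ S.filter fun w => w ∉ W ∧ R w a := by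
  ext w
  simp only [mem_extNOn, mem_filter, mem_union, mem_insert, exists_eq_or_imp]
  constructor
  · rintro ⟨hw, hW, h | h⟩
    · exact Or.inr ⟨hw, fun h' => hW (Or.inr h'), h⟩
    · exact Or.inl ⟨hw, fun h' => hW (Or.inr h'), h⟩
  · rintro (⟨hw, hW, h⟩ | ⟨hw, hW, h⟩) <;>
      exact ⟨hw, by rintro (rfl | h'); exacts [ha hw, hW h'], by tauto⟩

theorem JOn_eq_sum_ite {R : α → α → Prop} {S T : Finset α} (hST : S ⊆ T) (x y : ℝ) :
    JOn R S x y = ∑ W ∈ T.powerset,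
      if W ⊆ S then x ^ #W * y ^ #(extNOn R S W) else 0 := by
  rw [JOn, ← sum_filter]
  congr 1
  ext W
  simp only [mem_powerset, mem_filter]
  exact ⟨fun h => ⟨h.trans hST, h⟩, And.right⟩

end Relative

section Graph

variable {V : Type}

theorem JP_eq_JOn_map {W : Type} [Fintype W] (f : W ↪ V) (G' : SimpleGraph W)
    {R : V → V → Prop} (hR : ∀ a b, G'.Adj a b ↔ R (f a) (f b)) (x y : ℝ) :
    JP G' x y = JOn R (univ.map f) x y :=
  (JOn_map f hR univ x y).symm

theorem JP_eq_JOn [Fintype V] (G : SimpleGraph V) (x y : ℝ) : JP G x y = JOn G.Adj univ x y := rfl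

theorem JP_Gdel [Fintype V] (G : SimpleGraph V) (v : V) (x y : ℝ) :
    JP (Gdel G v) x y = JOn G.Adj (univ.erase v) x y := by
  rw [JP_eq_JOn_map (Function.Embedding.subtype _) _ fun _ _ => Iff.rfl, univ_map_subtype,
    filter_ne']

theorem JP_GdelSet [Fintype V] (G : SimpleGraph V) (S : Set V) [Fintype {v // v ∉ S}]
    [DecidablePred (· ∉ S)] (x y : ℝ) :
    JP (GdelSet G S) x y = JOn G.Adj (univ.filter (· ∉ S)) x y := by
  rw [JP_eq_JOn_map (Function.Embedding.subtype _) _ fun _ _ => Iff.rfl, univ_map_subtype]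

def contractAdj (G : SimpleGraph V) (u w c : V) : Prop :=
  w ≠ c ∧ (G.Adj w c ∨ G.Adj w u ∧ G.Adj u c)

theorem JP_Gcon_Gdel [Fintype V] (G : SimpleGraph V) {u v : V} (huv : u ≠ v) (x y : ℝ) :
    JP (Gcon (Gdel G v) ⟨u, huv⟩) x y = JOn (contractAdj G u) ((univ.erase v).erase u) x y := by
  rw [JP_eq_JOn_map ((Function.Embedding.subtype _).trans (Function.Embedding.subtype _)) _
    (R := contractAdj G u) fun a b => Subtype.ext_iff.not.trans Subtype.ext_iff.not |>.and Iff.rfl]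
  congr 1
  ext w
  simp [Subtype.ext_iff]

variable {G : SimpleGraph V} {u : V} {S A : Finset V}

theorem extNOn_contractAdj_of_exists (h : ∃ c ∈ A, G.Adj u c) :
    extNOn (contractAdj G u) (S.erase u) A = extNOn G.Adj S (insert u A) := by
  ext w
  simp only [mem_extNOn, mem_erase, mem_insert, exists_eq_or_imp, not_or]
  unfold contractAdj
  grind

theorem extNOn_contractAdj_of_not_exists (h : ¬∃ c ∈ A, G.Adj u c) :
    extNOn (contractAdj G u) (S.erase u) A = extNOn G.Adj S A := by
  ext w
  simp only [mem_extNOn, mem_erase]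
  unfold contractAdj
  grind

theorem card_extNOn_insert_of_not_exists (h : ¬∃ c ∈ A, G.Adj u c) :
    #(extNOn G.Adj S (insert u A)) = #(S.filter (G.Adj u)) +
      #(extNOn G.Adj (S.filter fun w => ¬(w = u ∨ G.Adj u w)) A) := by
  rw [← card_union_of_disjoint]
  · congr 1
    ext w
    simp only [mem_extNOn, mem_filter, mem_union, mem_insert, exists_eq_or_imp, not_or]
    grind [G.adj_comm, G.irrefl]
  · rw [disjoint_left]
    intro w hw hw'
    simp only [mem_extNOn, mem_filter] at hw hw'
    exact hw'.1.2 (Or.inr hw.2)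

theorem sum_powerset_erase_eq_JOn_contractAdj_add (G : SimpleGraph V) (u : V) (S : Finset V)
    (x y : ℝ) :
    ∑ A ∈ (S.erase u).powerset, x ^ #A * (y ^ #(extNOn G.Adj S (insert u A)) +
        if ∃ c ∈ A, G.Adj u c then 0 else y ^ #(extNOn G.Adj S A)) =
      JOn (contractAdj G u) (S.erase u) x y +
        y ^ #(S.filter (G.Adj u)) * JOn G.Adj (S.filter fun w => ¬(w = u ∨ G.Adj u w)) x y := by
  have hD : (S.filter fun w => ¬(w = u ∨ G.Adj u w)) ⊆ S.erase u := fun w hw => by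
    simp only [mem_filter, not_or] at hw
    exact mem_erase.2 ⟨hw.2.1, hw.1⟩
  rw [JOn, JOn_eq_sum_ite hD, mul_sum, ← sum_add_distrib]
  refine sum_congr rfl fun A hA => ?_
  have hAS := mem_powerset.1 hA
  have hu : u ∉ A := fun h => notMem_erase u S (hAS h)
  by_cases h : ∃ c ∈ A, G.Adj u c
  · have hAD : ¬A ⊆ S.filter fun w => ¬(w = u ∨ G.Adj u w) := fun hAD => by
      obtain ⟨c, hc, huc⟩ := h
      exact (mem_filter.1 (hAD hc)).2 (Or.inr huc)
    rw [if_pos h, if_neg hAD, extNOn_contractAdj_of_exists h]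
    ring
  · have hAD : A ⊆ S.filter fun w => ¬(w = u ∨ G.Adj u w) := fun c hc =>
      mem_filter.2 ⟨mem_of_mem_erase (hAS hc), by rintro (rfl | huc); exacts [hu hc, h ⟨c, hc, huc⟩]⟩
    rw [if_neg h, if_pos hAD, extNOn_contractAdj_of_not_exists h, card_extNOn_insert_of_not_exists h,
      pow_add]
    ring

end Graph

section Pendant

variable {V : Type} [Fintype V] {G : SimpleGraph V} {u v : V}

theorem extNOn_univ_of_pendant (hvu : ∀ w, G.Adj v w ↔ w = u) (W : Finset V) :
    extNOn G.Adj univ W = if v ∉ W ∧ u ∈ W then insert v (extNOn G.Adj (univ.erase v) W)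
      else extNOn G.Adj (univ.erase v) W := by
  rw [extNOn_of_mem (mem_univ v)]
  simp only [hvu, exists_eq_right]

theorem extNOn_erase_insert_of_pendant (hvu : ∀ w, G.Adj v w ↔ w = u) (W : Finset V) :
    extNOn G.Adj (univ.erase v) (insert v W) = if u ∈ W then extNOn G.Adj (univ.erase v) W
      else insert u (extNOn G.Adj (univ.erase v) W) := by
  have huv : u ≠ v := ((hvu u).2 rfl).ne'
  rw [extNOn_insert_of_notMem (notMem_erase v univ)]
  have hfilter : ((univ.erase v).filter fun w => w ∉ W ∧ G.Adj w v) = if u ∈ W then ∅ else {u} := by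
    ext w
    simp only [mem_filter, mem_erase, mem_univ, G.adj_comm w v, hvu]
    split_ifs <;> grind
  rw [hfilter]
  split_ifs
  · exact union_empty _
  · exact union_singleton _ _

theorem JOn_univ_of_pendant (hvu : ∀ w, G.Adj v w ↔ w = u) (x y : ℝ) :
    JOn G.Adj univ x y = (1 + x) * JOn G.Adj (univ.erase v) x y + x * (y - 1) *
      ∑ A ∈ ((univ.erase v).erase u).powerset,
        x ^ #A * (y ^ #(extNOn G.Adj (univ.erase v) (insert u A)) +
          if ∃ c ∈ A, G.Adj u c then 0 else y ^ #(extNOn G.Adj (univ.erase v) A)) := by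
  have huv : u ≠ v := ((hvu u).2 rfl).ne'
  have hu : u ∈ univ.erase v := mem_erase.2 ⟨huv, mem_univ u⟩
  rw [JOn, JOn, sum_powerset_eq_sum_erase (mem_univ v), sum_powerset_eq_sum_erase hu,
    sum_powerset_eq_sum_erase hu, mul_sum, mul_sum, ← sum_add_distrib]
  refine sum_congr rfl fun A hA => ?_
  have huA : u ∉ A := fun h => notMem_erase u _ (mem_powerset.1 hA h)
  have hvA : v ∉ A := fun h => notMem_erase v _ (mem_of_mem_erase (mem_powerset.1 hA h))
  have hvuA : v ∉ insert u A := by simp [huv.symm, hvA]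
  have h_A : #(extNOn G.Adj univ A) = #(extNOn G.Adj (univ.erase v) A) := by
    rw [extNOn_univ_of_pendant hvu, if_neg fun h => huA h.2]
  have h_uA : #(extNOn G.Adj univ (insert u A)) =
      #(extNOn G.Adj (univ.erase v) (insert u A)) + 1 := by
    rw [extNOn_univ_of_pendant hvu, if_pos ⟨hvuA, mem_insert_self u A⟩,
      card_insert_of_notMem fun h => notMem_erase v univ (mem_extNOn.1 h).1]
  have h_vuA : #(extNOn G.Adj univ (insert v (insert u A))) =
      #(extNOn G.Adj (univ.erase v) (insert u A)) := by
    rw [extNOn_univ_of_pendant hvu, if_neg fun h => h.1 (mem_insert_self v _),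
      extNOn_erase_insert_of_pendant hvu, if_pos (mem_insert_self u A)]
  have h_vA : #(extNOn G.Adj univ (insert v A)) =
      #(extNOn G.Adj (univ.erase v) A) + if ∃ c ∈ A, G.Adj u c then 0 else 1 := by
    rw [extNOn_univ_of_pendant hvu, if_neg fun h => h.1 (mem_insert_self v _),
      extNOn_erase_insert_of_pendant hvu, if_neg huA, card_insert_eq_ite]
    simp only [mem_extNOn, hu, huA, not_false_eq_true, true_and]
    split_ifs <;> rfl
  rw [h_A, h_uA, h_vuA, h_vA, card_insert_of_notMem hvuA, card_insert_of_notMem huA,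
    card_insert_of_notMem hvA]
  split_ifs <;> ring

end Pendant

theorem J_pendant_vertex {V : Type} [Fintype V] (G : SimpleGraph V) (u v : V)
    (hadj : G.Adj v u) (hdeg : Finset.univ.filter (fun w => G.Adj v w) = {u}) (x y : ℝ) :
    JP G x y
      = (1 + x) * JP (Gdel G v) x y
        + x * (y - 1) * (JP (Gcon (Gdel G v) ⟨u, hadj.ne'⟩) x y
            + y ^ ((Finset.univ.filter (fun w => G.Adj u w)).card - 1) *
                JP (GdelSet G {w : V | w = u ∨ G.Adj u w}) x y) := by
  have hvu : ∀ w, G.Adj v w ↔ w = u := fun w => by simpa using Finset.ext_iff.1 hdeg w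
  have hD : ((univ.erase v).filter fun w => ¬(w = u ∨ G.Adj u w)) =
      univ.filter (· ∉ {w : V | w = u ∨ G.Adj u w}) := by
    ext w
    simp only [mem_filter, mem_erase, mem_univ, Set.mem_ofPred_eq, and_true, true_and,
      and_iff_right_iff_imp]
    rintro h rfl
    exact h (Or.inr hadj.symm)
  rw [JP_eq_JOn, JOn_univ_of_pendant hvu, sum_powerset_erase_eq_JOn_contractAdj_add,
    filter_erase,
    card_erase_of_mem (by simpa using hadj.symm), hD, JP_Gdel, JP_Gcon_Gdel, JP_GdelSet]
end
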